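/- arXiv:2403.00380 — 3 statements merged into one kernel-verified Lean document; each statement's English description precedes it below -/
import Mathlib

section
/- Let n ≥ 3, let Y_k be a homogeneous harmonic polynomial of degree k on R^n with restriction 𝒴_k to S^{n-1}, and set U_k(x) = Y_k(x)[1 + (k/2 + (n-4)/4)(1 - |x|^2)]. Then U_k is biharmonic on B^n (Δ²U_k = 0), U_k = 𝒴_k on S^{n-1}, and ∂U_k/∂r = -((n-4)/2) 𝒴_k on S^{n-1}. -/
open scoped BigOperators

/-- The Euclidean Laplacian of a function on `ℝⁿ` (as `EuclideanSpace`). -/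
noncomputable def lapl {n : ℕ} (f : EuclideanSpace ℝ (Fin n) → ℝ)
    (x : EuclideanSpace ℝ (Fin n)) : ℝ :=
  ∑ i : Fin n, fderiv ℝ (fun y => fderiv ℝ f y (EuclideanSpace.single i 1)) x
    (EuclideanSpace.single i 1)

namespace Stmt3Aux

variable {n : ℕ}

lemma contDiff_D {f : EuclideanSpace ℝ (Fin n) → ℝ} (hf : ContDiff ℝ (⊤ : ℕ∞) f)
    (v : EuclideanSpace ℝ (Fin n)) : ContDiff ℝ (⊤ : ℕ∞) (fun y => fderiv ℝ f y v) :=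
  (hf.fderiv_right (mod_cast le_top)).clm_apply contDiff_const

lemma sum_single (x : EuclideanSpace ℝ (Fin n)) :
    (∑ i, x i • EuclideanSpace.single i (1:ℝ)) = x := by
  ext j
  rw [WithLp.ofLp_sum, Finset.sum_apply]
  simp [EuclideanSpace.single_apply]

/-- Euler's identity for homogeneous functions. -/
lemma euler {k : ℕ} {Y : EuclideanSpace ℝ (Fin n) → ℝ} (hY : ContDiff ℝ (⊤ : ℕ∞) Y)
    (hhom : ∀ (c : ℝ) (x : EuclideanSpace ℝ (Fin n)), Y (c • x) = c ^ k * Y x)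
    (x : EuclideanSpace ℝ (Fin n)) : fderiv ℝ Y x x = k * Y x := by
  have hx : HasDerivAt (fun c : ℝ => c • x) x 1 := by
    simpa using (hasDerivAt_id (1:ℝ)).smul_const x
  have h1 : HasDerivAt (fun c : ℝ => Y (c • x)) (fderiv ℝ Y x x) 1 := by
    simpa [Function.comp_def] using ((hY.differentiable (by simp) ((1:ℝ) • x)).hasFDerivAt.comp_hasDerivAt 1 hx)
  have h2 : HasDerivAt (fun c : ℝ => c ^ k * Y x) ((k : ℝ) * Y x) 1 := by
    simpa using (hasDerivAt_pow k (1:ℝ)).mul_const (Y x)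
  have he : (fun c : ℝ => Y (c • x)) = fun c : ℝ => c ^ k * Y x :=
    funext fun c => hhom c x
  rw [he] at h1
  exact h1.unique h2

/-- Product rule for the Laplacian. -/
lemma lapl_mul {f g : EuclideanSpace ℝ (Fin n) → ℝ} (hf : ContDiff ℝ (⊤ : ℕ∞) f)
    (hg : ContDiff ℝ (⊤ : ℕ∞) g) (x : EuclideanSpace ℝ (Fin n)) :
    lapl (fun y => f y * g y) x
      = f x * lapl g x
        + 2 * ∑ i, fderiv ℝ f x (EuclideanSpace.single i 1)
            * fderiv ℝ g x (EuclideanSpace.single i 1)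
        + g x * lapl f x := by
  have hdf : Differentiable ℝ f := hf.differentiable (by simp)
  have hdg : Differentiable ℝ g := hg.differentiable (by simp)
  have key : ∀ i : Fin n,
      fderiv ℝ (fun y => fderiv ℝ (fun y => f y * g y) y (EuclideanSpace.single i 1)) x
        (EuclideanSpace.single i 1)
      = f x * fderiv ℝ (fun y => fderiv ℝ g y (EuclideanSpace.single i 1)) x
            (EuclideanSpace.single i 1)
        + 2 * (fderiv ℝ f x (EuclideanSpace.single i 1)
            * fderiv ℝ g x (EuclideanSpace.single i 1))
        + g x * fderiv ℝ (fun y => fderiv ℝ f y (EuclideanSpace.single i 1)) x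
            (EuclideanSpace.single i 1) := by
    intro i
    set e : EuclideanSpace ℝ (Fin n) := EuclideanSpace.single i 1 with he
    have hDf : Differentiable ℝ (fun y => fderiv ℝ f y e) :=
      (contDiff_D hf e).differentiable (by simp)
    have hDg : Differentiable ℝ (fun y => fderiv ℝ g y e) :=
      (contDiff_D hg e).differentiable (by simp)
    have h1 : (fun y => fderiv ℝ (fun y => f y * g y) y e)
        = fun y => f y * fderiv ℝ g y e + g y * fderiv ℝ f y e := by
      funext y
      rw [fderiv_fun_mul (hdf y) (hdg y)]
      simp [mul_comm]
    rw [h1, fderiv_fun_add ((hdf x).fun_mul (hDg x)) ((hdg x).fun_mul (hDf x))]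
    rw [ContinuousLinearMap.add_apply,
      fderiv_fun_mul (hdf x) (hDg x), fderiv_fun_mul (hdg x) (hDf x)]
    simp only [ContinuousLinearMap.add_apply, ContinuousLinearMap.smul_apply,
      smul_eq_mul]
    ring
  unfold lapl
  rw [Finset.sum_congr rfl fun i _ => key i]
  rw [Finset.sum_add_distrib, Finset.sum_add_distrib, ← Finset.mul_sum,
    ← Finset.mul_sum, ← Finset.mul_sum]

lemma lapl_const_mul {f : EuclideanSpace ℝ (Fin n) → ℝ} (hf : ContDiff ℝ (⊤ : ℕ∞) f)
    (c : ℝ) (x : EuclideanSpace ℝ (Fin n)) :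
    lapl (fun y => c * f y) x = c * lapl f x := by
  unfold lapl
  rw [Finset.mul_sum]
  refine Finset.sum_congr rfl fun i _ => ?_
  have h1 : (fun y => fderiv ℝ (fun y => c * f y) y (EuclideanSpace.single i 1))
      = fun y => c * fderiv ℝ f y (EuclideanSpace.single i 1) := by
    funext y
    rw [fderiv_const_mul (hf.differentiable (by simp) y) c]
    simp
  rw [h1, fderiv_const_mul (((contDiff_D hf _).differentiable (by simp)) x) c]
  simp

/-- The auxiliary factor `g(y) = 1 + C (1 - ‖y‖²)`. -/
lemma hasFDerivAt_g (C : ℝ) (x : EuclideanSpace ℝ (Fin n)) :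
    HasFDerivAt (fun y : EuclideanSpace ℝ (Fin n) => 1 + C * (1 - ‖y‖ ^ 2))
      ((-2 * C) • innerSL ℝ x) x := by
  have h1 : HasFDerivAt (fun y : EuclideanSpace ℝ (Fin n) => ‖y‖ ^ 2)
      (2 • innerSL ℝ x) x := (hasStrictFDerivAt_norm_sq x).hasFDerivAt
  have h2 := (hasFDerivAt_const (1 + C) x).sub (h1.const_mul C)
  have he : (fun y : EuclideanSpace ℝ (Fin n) => 1 + C - C * ‖y‖ ^ 2)
      = fun y : EuclideanSpace ℝ (Fin n) => 1 + C * (1 - ‖y‖ ^ 2) := by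
    funext y; ring
  simp only [Pi.sub_def] at h2
  rw [he] at h2
  refine h2.congr_fderiv ?_
  ext y
  simp [two_smul]
  ring

lemma contDiff_g (C : ℝ) :
    ContDiff ℝ (⊤ : ℕ∞) (fun y : EuclideanSpace ℝ (Fin n) => 1 + C * (1 - ‖y‖ ^ 2)) :=
  contDiff_const.add (contDiff_const.mul (contDiff_const.sub (contDiff_norm_sq ℝ)))

lemma fderiv_g_apply (C : ℝ) (x v : EuclideanSpace ℝ (Fin n)) :
    fderiv ℝ (fun y : EuclideanSpace ℝ (Fin n) => 1 + C * (1 - ‖y‖ ^ 2)) x v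
      = -2 * C * inner ℝ x v := by
  rw [(hasFDerivAt_g C x).fderiv]
  simp

lemma lapl_g (C : ℝ) (x : EuclideanSpace ℝ (Fin n)) :
    lapl (fun y : EuclideanSpace ℝ (Fin n) => 1 + C * (1 - ‖y‖ ^ 2)) x
      = -2 * C * n := by
  unfold lapl
  have key : ∀ i : Fin n,
      fderiv ℝ (fun y => fderiv ℝ
          (fun y : EuclideanSpace ℝ (Fin n) => 1 + C * (1 - ‖y‖ ^ 2)) y
          (EuclideanSpace.single i 1)) x (EuclideanSpace.single i 1)
        = -2 * C := by
    intro i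
    have h1 : (fun y => fderiv ℝ
          (fun y : EuclideanSpace ℝ (Fin n) => 1 + C * (1 - ‖y‖ ^ 2)) y
          (EuclideanSpace.single i 1))
        = fun y => (-2 * C) * EuclideanSpace.proj (𝕜 := ℝ) i y := by
      funext y
      rw [fderiv_g_apply]
      simp [EuclideanSpace.inner_single_right]
    rw [h1]
    have h2 : HasFDerivAt (fun y => (-2 * C) * EuclideanSpace.proj (𝕜 := ℝ) i y)
        ((-2 * C) • (EuclideanSpace.proj (𝕜 := ℝ) i
          : EuclideanSpace ℝ (Fin n) →L[ℝ] ℝ)) x :=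
      (EuclideanSpace.proj (𝕜 := ℝ) i).hasFDerivAt.const_mul (-2 * C)
    rw [h2.fderiv]
    simp [EuclideanSpace.single_apply]
  rw [Finset.sum_congr rfl fun i _ => key i]
  simp [mul_comm]

end Stmt3Aux

/-- for `n ≥ 3` and `Y` a harmonic polynomial homogeneous of degree `k` on `ℝⁿ`,
the function `U_k(x) = Y(x)[1 + (k/2 + (n-4)/4)(1 - |x|²)]` is biharmonic on the unit ball,
equals `Y` on the unit sphere, and its radial derivative on the sphere is `-((n-4)/2) Y`. -/
theorem stmt3 (n k : ℕ) (hn : 3 ≤ n) (Y : EuclideanSpace ℝ (Fin n) → ℝ)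
    (hY : ContDiff ℝ (⊤ : ℕ∞) Y)
    (hhom : ∀ (c : ℝ) (x : EuclideanSpace ℝ (Fin n)), Y (c • x) = c ^ k * Y x)
    (hharm : ∀ x, lapl Y x = 0) :
    (∀ x ∈ Metric.ball (0 : EuclideanSpace ℝ (Fin n)) 1,
        lapl (lapl (fun y => Y y * (1 + ((k : ℝ) / 2 + ((n : ℝ) - 4) / 4) * (1 - ‖y‖ ^ 2)))) x
          = 0) ∧
    (∀ x : EuclideanSpace ℝ (Fin n), ‖x‖ = 1 →
        Y x * (1 + ((k : ℝ) / 2 + ((n : ℝ) - 4) / 4) * (1 - ‖x‖ ^ 2)) = Y x) ∧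
    (∀ x : EuclideanSpace ℝ (Fin n), ‖x‖ = 1 →
        deriv (fun t : ℝ =>
          Y (t • x) * (1 + ((k : ℝ) / 2 + ((n : ℝ) - 4) / 4) * (1 - ‖t • x‖ ^ 2))) 1
          = -(((n : ℝ) - 4) / 2) * Y x) := by
  set C : ℝ := (k : ℝ) / 2 + ((n : ℝ) - 4) / 4 with hC
  refine ⟨?_, ?_, ?_⟩
  · -- biharmonicity
    intro x _
    have hU : lapl (fun y => Y y * (1 + C * (1 - ‖y‖ ^ 2)))
        = fun y => (-2 * C * ((n : ℝ) + 2 * k)) * Y y := by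
      funext z
      rw [Stmt3Aux.lapl_mul hY (Stmt3Aux.contDiff_g C) z, hharm z,
        Stmt3Aux.lapl_g C z]
      have hsum : ∑ i, fderiv ℝ Y z (EuclideanSpace.single i 1)
          * fderiv ℝ (fun y : EuclideanSpace ℝ (Fin n) => 1 + C * (1 - ‖y‖ ^ 2)) z
            (EuclideanSpace.single i 1)
          = -2 * C * ((k : ℝ) * Y z) := by
        have h1 : ∀ i : Fin n,
            fderiv ℝ Y z (EuclideanSpace.single i 1)
              * fderiv ℝ (fun y : EuclideanSpace ℝ (Fin n) => 1 + C * (1 - ‖y‖ ^ 2)) z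
                (EuclideanSpace.single i 1)
            = -2 * C * (z i * fderiv ℝ Y z (EuclideanSpace.single i 1)) := by
          intro i
          rw [Stmt3Aux.fderiv_g_apply]
          have hz : (inner ℝ z (EuclideanSpace.single i 1) : ℝ) = z i := by
            simp [EuclideanSpace.inner_single_right]
          rw [hz]; ring
        rw [Finset.sum_congr rfl fun i _ => h1 i, ← Finset.mul_sum]
        have h2 : fderiv ℝ Y z (∑ i, z i • EuclideanSpace.single i (1:ℝ))
            = ∑ i, z i * fderiv ℝ Y z (EuclideanSpace.single i 1) := by
          rw [map_sum]
          simp [smul_eq_mul]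
        rw [Stmt3Aux.sum_single z] at h2
        rw [← h2, Stmt3Aux.euler hY hhom z]
      rw [hsum]
      ring
    rw [hU, Stmt3Aux.lapl_const_mul hY _ x, hharm x, mul_zero]
  · -- boundary value
    intro x hx
    rw [hx]
    ring
  · -- radial derivative
    intro x hx
    have he : (fun t : ℝ => Y (t • x) * (1 + C * (1 - ‖t • x‖ ^ 2)))
        = fun t : ℝ => Y x * ((1 + C) * t ^ k - C * t ^ (k + 2)) := by
      funext t
      rw [hhom t x, norm_smul, hx]
      simp only [Real.norm_eq_abs, mul_one]
      rw [sq_abs]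
      ring
    rw [he]
    have hd : HasDerivAt (fun t : ℝ => Y x * ((1 + C) * t ^ k - C * t ^ (k + 2)))
        (Y x * ((1 + C) * ((k : ℝ) * 1 ^ (k - 1)) - C * (((k : ℝ) + 2) * 1 ^ (k + 1)))) 1 := by
      have := (((hasDerivAt_pow k (1:ℝ)).const_mul (1 + C)).sub
        ((hasDerivAt_pow (k + 2) (1:ℝ)).const_mul C)).const_mul (Y x)
      simpa [Nat.add_sub_cancel] using this
    rw [hd.deriv]
    simp only [one_pow, hC]
    push_cast
    ring
end

section
/- Let f ∈ C^∞(R²) satisfy |f(y)| ≤ C(1+|y|)^{-a} for some a > 3, and define v̂(x,t) = (1/4π)∫_{R²} √(t² + |x-y|²) f(y) dy for (x,t) ∈ R²×[0,∞). Set β = (1/4π)∫_{R²} f(y) dy and X = (x,t). Then there is a constant C' such that |v̂(x,t) - β|X|| ≤ C' ∫_{R²} |y||f(y)| dy for all |X| sufficiently large. -/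
open MeasureTheory

private lemma sqrt_diff_le_aux (s a b : ℝ) (hs : 0 ≤ s) (hb : 0 ≤ b) :
    Real.sqrt (s + a ^ 2) - Real.sqrt (s + b ^ 2) ≤ |a - b| := by
  have hbb : b ≤ Real.sqrt (s + b ^ 2) := by
    have : b = Real.sqrt (b ^ 2) := by rw [Real.sqrt_sq hb]
    rw [this]
    exact Real.sqrt_le_sqrt (by nlinarith)
  have hs2 : Real.sqrt (s + b ^ 2) ^ 2 = s + b ^ 2 := Real.sq_sqrt (by positivity)
  have key : s + a ^ 2 ≤ (Real.sqrt (s + b ^ 2) + |a - b|) ^ 2 := by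
    nlinarith [le_abs_self (a - b), neg_abs_le (a - b), abs_nonneg (a - b),
      Real.sqrt_nonneg (s + b ^ 2), sq_abs (a - b)]
  have h1 : Real.sqrt (s + a ^ 2) ≤ Real.sqrt (s + b ^ 2) + |a - b| := by
    calc Real.sqrt (s + a ^ 2) ≤ Real.sqrt ((Real.sqrt (s + b ^ 2) + |a - b|) ^ 2) :=
          Real.sqrt_le_sqrt key
      _ = Real.sqrt (s + b ^ 2) + |a - b| := Real.sqrt_sq (by positivity)
  linarith

private lemma sqrt_diff_le (s a b : ℝ) (hs : 0 ≤ s) (ha : 0 ≤ a) (hb : 0 ≤ b) :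
    |Real.sqrt (s + a ^ 2) - Real.sqrt (s + b ^ 2)| ≤ |a - b| := by
  rw [abs_sub_le_iff]
  constructor
  · exact sqrt_diff_le_aux s a b hs hb
  · have := sqrt_diff_le_aux s b a hs ha
    rwa [abs_sub_comm] at this

/-- with `v̂(x,t) = (1/4π)∫_{ℝ²} √(t²+|x-y|²) f(y) dy` and
`β = (1/4π)∫ f`, there is a constant `C'` with
`|v̂(x,t) - β|X|| ≤ C' ∫ |y||f(y)| dy` for all `X = (x,t)` in the closed upper half-space
with `|X| = √(t²+|x|²)` sufficiently large. -/
theorem stmt11 (f : EuclideanSpace ℝ (Fin 2) → ℝ) (hf : ContDiff ℝ (⊤ : ℕ∞) f)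
    (C : ℝ) (aexp : ℝ) (ha : 3 < aexp)
    (hdecay : ∀ y, |f y| ≤ C * (1 + ‖y‖) ^ (-aexp)) :
    let vhat : EuclideanSpace ℝ (Fin 2) → ℝ → ℝ := fun x t =>
      (1 / (4 * Real.pi)) *
        ∫ y : EuclideanSpace ℝ (Fin 2), Real.sqrt (t ^ 2 + ‖x - y‖ ^ 2) * f y
    let β : ℝ := (1 / (4 * Real.pi)) * ∫ y : EuclideanSpace ℝ (Fin 2), f y
    ∃ C' R : ℝ, ∀ (x : EuclideanSpace ℝ (Fin 2)) (t : ℝ), 0 ≤ t →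
      R ≤ Real.sqrt (t ^ 2 + ‖x‖ ^ 2) →
      |vhat x t - β * Real.sqrt (t ^ 2 + ‖x‖ ^ 2)| ≤
        C' * ∫ y : EuclideanSpace ℝ (Fin 2), ‖y‖ * |f y| := by
  intro vhat β
  have hfc : Continuous f := hf.continuous
  have hpi : (0:ℝ) < Real.pi := Real.pi_pos
  -- basic integrability facts
  have hd1 : Integrable (fun y : EuclideanSpace ℝ (Fin 2) => (1 + ‖y‖) ^ (-aexp)) := by
    apply integrable_one_add_norm
    simp only [finrank_euclideanSpace, Fintype.card_fin]
    norm_num; linarith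
  have hd2 : Integrable (fun y : EuclideanSpace ℝ (Fin 2) => (1 + ‖y‖) ^ (-(aexp - 1))) := by
    apply integrable_one_add_norm
    simp only [finrank_euclideanSpace, Fintype.card_fin]
    norm_num; linarith
  have hpow : ∀ y : EuclideanSpace ℝ (Fin 2),
      (1 + ‖y‖) * (1 + ‖y‖) ^ (-aexp) = (1 + ‖y‖) ^ (-(aexp - 1)) := by
    intro y
    have h0 : (0:ℝ) < 1 + ‖y‖ := by positivity
    rw [show -(aexp - 1) = 1 + -aexp by ring, Real.rpow_add h0, Real.rpow_one]
  have hf_int : Integrable f := by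
    apply (hd1.const_mul C).mono' hfc.aestronglyMeasurable
    filter_upwards with y
    rw [Real.norm_eq_abs]
    exact hdecay y
  have hyf_int : Integrable (fun y : EuclideanSpace ℝ (Fin 2) => ‖y‖ * |f y|) := by
    apply (hd2.const_mul C).mono'
    · exact (continuous_norm.mul hfc.abs).aestronglyMeasurable
    · filter_upwards with y
      rw [Real.norm_eq_abs, abs_of_nonneg (by positivity)]
      calc ‖y‖ * |f y| ≤ (1 + ‖y‖) * (C * (1 + ‖y‖) ^ (-aexp)) := by
            apply mul_le_mul (by linarith [norm_nonneg y]) (hdecay y) (abs_nonneg _)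
              (by positivity)
        _ = C * ((1 + ‖y‖) * (1 + ‖y‖) ^ (-aexp)) := by ring
        _ = C * (1 + ‖y‖) ^ (-(aexp - 1)) := by rw [hpow y]
  refine ⟨1 / (4 * Real.pi), 0, fun x t ht _ => ?_⟩
  set c : ℝ := Real.sqrt (t ^ 2 + ‖x‖ ^ 2) with hc
  -- integrability of the main integrand
  have hsqrt_le : ∀ y : EuclideanSpace ℝ (Fin 2),
      Real.sqrt (t ^ 2 + ‖x - y‖ ^ 2) ≤ t + ‖x‖ + ‖y‖ := by
    intro y
    have h1 : Real.sqrt (t ^ 2 + ‖x - y‖ ^ 2) ≤ Real.sqrt ((t + ‖x - y‖) ^ 2) := by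
      apply Real.sqrt_le_sqrt; nlinarith [norm_nonneg (x - y)]
    rw [Real.sqrt_sq (by positivity)] at h1
    have h2 : ‖x - y‖ ≤ ‖x‖ + ‖y‖ := norm_sub_le x y
    linarith
  have hg_int : Integrable (fun y : EuclideanSpace ℝ (Fin 2) =>
      Real.sqrt (t ^ 2 + ‖x - y‖ ^ 2) * f y) := by
    have hbd : Integrable (fun y : EuclideanSpace ℝ (Fin 2) =>
        (t + ‖x‖) * (C * (1 + ‖y‖) ^ (-aexp)) + C * (1 + ‖y‖) ^ (-(aexp - 1))) :=
      ((hd1.const_mul C).const_mul (t + ‖x‖)).add (hd2.const_mul C)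
    apply hbd.mono'
    · exact ((Real.continuous_sqrt.comp (by fun_prop)).mul hfc).aestronglyMeasurable
    · filter_upwards with y
      rw [Real.norm_eq_abs, abs_mul, abs_of_nonneg (Real.sqrt_nonneg _)]
      calc Real.sqrt (t ^ 2 + ‖x - y‖ ^ 2) * |f y|
          ≤ (t + ‖x‖ + ‖y‖) * (C * (1 + ‖y‖) ^ (-aexp)) := by
            apply mul_le_mul (hsqrt_le y) (hdecay y) (abs_nonneg _)
            have := norm_nonneg x; have := norm_nonneg y; linarith
        _ = (t + ‖x‖) * (C * (1 + ‖y‖) ^ (-aexp))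
              + C * (‖y‖ * (1 + ‖y‖) ^ (-aexp)) := by ring
        _ ≤ (t + ‖x‖) * (C * (1 + ‖y‖) ^ (-aexp)) + C * (1 + ‖y‖) ^ (-(aexp - 1)) := by
            gcongr
            · rcases le_or_gt 0 C with hC | hC
              · exact hC
              · exfalso
                have := hdecay 0
                have h0 : (0:ℝ) < (1 + ‖(0 : EuclideanSpace ℝ (Fin 2))‖) ^ (-aexp) := by
                  positivity
                nlinarith [abs_nonneg (f 0)]
            · rw [← hpow y]
              apply mul_le_mul_of_nonneg_right (by linarith [norm_nonneg y]) (by positivity)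
  have hsub_int : Integrable (fun y : EuclideanSpace ℝ (Fin 2) =>
      (Real.sqrt (t ^ 2 + ‖x - y‖ ^ 2) - c) * f y) := by
    simp only [sub_mul]
    exact hg_int.sub (hf_int.const_mul c)
  -- rewrite the difference as one integral
  have key : vhat x t - β * c =
      (1 / (4 * Real.pi)) *
        ∫ y : EuclideanSpace ℝ (Fin 2), (Real.sqrt (t ^ 2 + ‖x - y‖ ^ 2) - c) * f y := by
    have h1 : (∫ y : EuclideanSpace ℝ (Fin 2),
          (Real.sqrt (t ^ 2 + ‖x - y‖ ^ 2) - c) * f y)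
        = (∫ y : EuclideanSpace ℝ (Fin 2), Real.sqrt (t ^ 2 + ‖x - y‖ ^ 2) * f y)
          - c * ∫ y : EuclideanSpace ℝ (Fin 2), f y := by
      simp only [sub_mul]
      rw [integral_sub hg_int (hf_int.const_mul c), integral_const_mul]
    simp only [vhat, β]
    rw [h1]
    ring
  rw [key]
  have hptwise : ∀ y : EuclideanSpace ℝ (Fin 2),
      |(Real.sqrt (t ^ 2 + ‖x - y‖ ^ 2) - c) * f y| ≤ ‖y‖ * |f y| := by
    intro y
    rw [abs_mul]
    apply mul_le_mul_of_nonneg_right _ (abs_nonneg _)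
    have h1 := sqrt_diff_le (t ^ 2) ‖x - y‖ ‖x‖ (sq_nonneg t) (norm_nonneg _) (norm_nonneg _)
    have h2 : |‖x - y‖ - ‖x‖| ≤ ‖y‖ := by
      have := abs_norm_sub_norm_le (x - y) x
      simpa using this
    exact le_trans h1 h2
  have hmain : |∫ y : EuclideanSpace ℝ (Fin 2),
      (Real.sqrt (t ^ 2 + ‖x - y‖ ^ 2) - c) * f y|
      ≤ ∫ y : EuclideanSpace ℝ (Fin 2), ‖y‖ * |f y| := by
    calc |∫ y : EuclideanSpace ℝ (Fin 2),
            (Real.sqrt (t ^ 2 + ‖x - y‖ ^ 2) - c) * f y|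
        ≤ ∫ y : EuclideanSpace ℝ (Fin 2),
            |(Real.sqrt (t ^ 2 + ‖x - y‖ ^ 2) - c) * f y| := by
          have := norm_integral_le_integral_norm (μ := (volume : Measure (EuclideanSpace ℝ (Fin 2))))
            (fun y => (Real.sqrt (t ^ 2 + ‖x - y‖ ^ 2) - c) * f y)
          simpa [Real.norm_eq_abs, abs_mul] using this
      _ ≤ ∫ y : EuclideanSpace ℝ (Fin 2), ‖y‖ * |f y| := by
          apply integral_mono hsub_int.abs hyf_int hptwise
  rw [abs_mul, abs_of_nonneg (show (0:ℝ) ≤ 1 / (4 * Real.pi) by positivity)]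
  exact mul_le_mul_of_nonneg_left hmain (by positivity)
end

section
/- For n ≥ 3, n ≠ 4, and a ∈ B^n, the function U_a(x) = ((1-|a|²)/(|a|²|x|² - 2a·x + 1))^{(n-4)/2} + ((n-4)/4)(1 - |x|²)((1-|a|²)/(|a|²|x|² - 2a·x + 1))^{(n-2)/2} is biharmonic on the closed unit ball B^n and satisfies the Neumann condition ∂U_a/∂r = -((n-4)/2) U_a on S^{n-1}. -/
open scoped BigOperators RealInnerProductSpace

/-- The Möbius conformal factor `(1-|a|²)/(|a|²|x|² - 2 a·x + 1)`. -/
noncomputable def mobiusFactor {n : ℕ} (a x : EuclideanSpace ℝ (Fin n)) : ℝ :=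
  (1 - ‖a‖ ^ 2) / (‖a‖ ^ 2 * ‖x‖ ^ 2 - 2 * ⟪a, x⟫ + 1)

/-!
Write `q(x) = |a|²|x|² - 2a·x + 1`, `c = 1 - |a|²` and `p = (n-4)/2`, so that
`U_a = c^p q^(-p) + (p/2) c^(p+1) (1 - |x|²) q^(-p-1)`. Both terms have the shape
`(A + B|x|²) q^γ`, and since `∇q = 2(|a|²x - a)` with `|∇q|² = 4|a|² q`, the Laplacian maps such a
function to `A' q^γ + (A'' + B''|x|²) q^(γ-1)` with explicit coefficients. In dimension `n = 2p + 4`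
this gives `ΔU_a = A₁ q^(-(n-2)/2) + D (|a|²|x|² - 1) q^(-n/2)`, and both summands are harmonic
where `q ≠ 0`: up to constants they are the Newtonian potential and the Poisson kernel with pole
`a/|a|²`. On the unit sphere the factor `1 - |x|²` vanishes, and the radial derivative is read off
the gradient of `q`.
-/

open scoped Topology Laplacian

section Laplacian

variable {n : ℕ} {f g : EuclideanSpace ℝ (Fin n) → ℝ} {x : EuclideanSpace ℝ (Fin n)}

lemma Filter.EventuallyEq.lapl (h : f =ᶠ[𝓝 x] g) : lapl f =ᶠ[𝓝 x] lapl g := by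
  filter_upwards [h.eventuallyEq_nhds] with y hy
  unfold _root_.lapl
  refine Finset.sum_congr rfl fun i _ => ?_
  have h' : (fun z => fderiv ℝ f z (EuclideanSpace.single i 1)) =ᶠ[𝓝 y]
      (fun z => fderiv ℝ g z (EuclideanSpace.single i 1)) := by
    filter_upwards [hy.fderiv (𝕜 := ℝ)] with z hz
    rw [hz]
  rw [h'.fderiv_eq]

lemma lapl_eq_laplacian (hf : ContDiffAt ℝ 2 f x) : lapl f x = Δ f x := by
  have hdf : DifferentiableAt ℝ (fderiv ℝ f) x :=
    (hf.fderiv_right (m := 1) (by norm_num)).differentiableAt one_ne_zero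
  rw [InnerProductSpace.laplacian_eq_iteratedFDeriv_orthonormalBasis f
    (EuclideanSpace.basisFun (Fin n) ℝ)]
  refine Finset.sum_congr rfl fun i _ => ?_
  rw [iteratedFDeriv_two_apply, EuclideanSpace.basisFun_apply,
    fderiv_clm_apply hdf (differentiableAt_const _)]
  simp

lemma lapl_add (hf : ContDiffAt ℝ 2 f x) (hg : ContDiffAt ℝ 2 g x) :
    lapl (fun y => f y + g y) x = lapl f x + lapl g x := by
  rw [lapl_eq_laplacian hf, lapl_eq_laplacian hg, ← hf.laplacian_add hg]
  exact lapl_eq_laplacian (hf.add hg)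

lemma sum_inner_single_mul_inner_single (u w : EuclideanSpace ℝ (Fin n)) :
    ∑ i, ⟪u, EuclideanSpace.single i 1⟫ * ⟪w, EuclideanSpace.single i 1⟫ = ⟪u, w⟫ := by
  simpa [real_inner_comm] using (EuclideanSpace.basisFun (Fin n) ℝ).sum_inner_mul_inner u w

end Laplacian

section InnerProductSpace

variable {E : Type*} [NormedAddCommGroup E] [InnerProductSpace ℝ E]

noncomputable def mobiusDenom (a x : E) : ℝ := ‖a‖ ^ 2 * ‖x‖ ^ 2 - 2 * ⟪a, x⟫ + 1

noncomputable def weightedPow (a : E) (A B γ : ℝ) (x : E) : ℝ :=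
  (A + B * ‖x‖ ^ 2) * mobiusDenom a x ^ γ

noncomputable def mobiusBubble (a : E) (p : ℝ) (x : E) : ℝ :=
  weightedPow a ((1 - ‖a‖ ^ 2) ^ p) 0 (-p) x
    + weightedPow a (p / 2 * (1 - ‖a‖ ^ 2) ^ (p + 1)) (-(p / 2 * (1 - ‖a‖ ^ 2) ^ (p + 1)))
        (-p - 1) x

variable {a x : E} {A B γ : ℝ}

lemma mobiusDenom_pos (ha : ‖a‖ < 1) (hx : ‖x‖ ≤ 1) : 0 < mobiusDenom a x := by
  have hax : ‖a‖ * ‖x‖ < 1 := by nlinarith [norm_nonneg a, norm_nonneg x]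
  have := real_inner_le_norm a x
  unfold mobiusDenom
  nlinarith [mul_pos (sub_pos.2 hax) (sub_pos.2 hax)]

lemma contDiff_mobiusDenom (a : E) {k : WithTop ℕ∞} : ContDiff ℝ k (mobiusDenom a) :=
  ((contDiff_const.mul (contDiff_norm_sq ℝ)).sub
    (contDiff_const.mul (contDiff_const.inner ℝ contDiff_id))).add contDiff_const

lemma continuous_mobiusDenom (a : E) : Continuous (mobiusDenom a) :=
  (contDiff_mobiusDenom a (k := 0)).continuous

lemma hasFDerivAt_mobiusDenom (a x : E) :
    HasFDerivAt (mobiusDenom a) ((2 : ℝ) • innerSL ℝ (‖a‖ ^ 2 • x - a)) x := by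
  refine ((((hasFDerivAt_id x).norm_sq.const_mul (‖a‖ ^ 2)).sub
    ((innerSL ℝ a).hasFDerivAt.const_mul 2)).add_const 1).congr_fderiv ?_
  ext v
  simp only [ContinuousLinearMap.comp_id, sub_apply, smul_apply, coe_innerSL_apply, nsmul_eq_mul,
    id_eq, smul_eq_mul, map_sub, map_smul]
  ring

lemma norm_sq_smul_sub_eq_mobiusDenom (a x : E) :
    ‖‖a‖ ^ 2 • x - a‖ ^ 2 = ‖a‖ ^ 2 * mobiusDenom a x := by
  rw [norm_sub_sq_real, norm_smul, real_inner_smul_left, real_inner_comm, mobiusDenom]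
  simp only [Real.norm_eq_abs, abs_pow, abs_norm]
  ring

lemma contDiffAt_weightedPow (hx : mobiusDenom a x ≠ 0) {k : ℕ} :
    ContDiffAt ℝ k (weightedPow a A B γ) x :=
  (contDiffAt_const.add (contDiffAt_const.mul (contDiff_norm_sq ℝ).contDiffAt)).mul
    ((contDiff_mobiusDenom a).contDiffAt.rpow_const_of_ne hx)

lemma hasFDerivAt_weightedPow (hx : mobiusDenom a x ≠ 0) :
    HasFDerivAt (weightedPow a A B γ)
      ((2 * (A + B * ‖x‖ ^ 2) * γ * mobiusDenom a x ^ (γ - 1)) • innerSL ℝ (‖a‖ ^ 2 • x - a)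
        + (2 * B * mobiusDenom a x ^ γ) • innerSL ℝ x) x := by
  refine ((((hasFDerivAt_id x).norm_sq.const_mul B).const_add A).mul
    ((hasFDerivAt_mobiusDenom a x).rpow_const (p := γ) (Or.inl hx))).congr_fderiv ?_
  ext v
  simp only [id_eq, map_sub, map_smul, ContinuousLinearMap.comp_id, add_apply, smul_apply,
    sub_apply, coe_innerSL_apply, smul_eq_mul, nsmul_eq_mul, Nat.cast_ofNat]
  ring

lemma fderiv_fderiv_weightedPow_apply (hx : mobiusDenom a x ≠ 0) (v : E) :
    fderiv ℝ (fun y => fderiv ℝ (weightedPow a A B γ) y v) x v =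
      4 * γ * (γ - 1) * (A + B * ‖x‖ ^ 2) * mobiusDenom a x ^ (γ - 2) * ⟪‖a‖ ^ 2 • x - a, v⟫ ^ 2
        + 8 * B * γ * mobiusDenom a x ^ (γ - 1) * (⟪x, v⟫ * ⟪‖a‖ ^ 2 • x - a, v⟫)
        + 2 * (γ * ‖a‖ ^ 2 * (A + B * ‖x‖ ^ 2) * mobiusDenom a x ^ (γ - 1)
          + B * mobiusDenom a x ^ γ) * ‖v‖ ^ 2 := by
  have hev : (fun y => fderiv ℝ (weightedPow a A B γ) y v) =ᶠ[𝓝 x] fun y =>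
      2 * (A + B * ‖y‖ ^ 2) * γ * mobiusDenom a y ^ (γ - 1) * (‖a‖ ^ 2 * ⟪y, v⟫ - ⟪a, v⟫)
        + 2 * B * mobiusDenom a y ^ γ * ⟪y, v⟫ := by
    filter_upwards [(continuous_mobiusDenom a).continuousAt.eventually_ne hx] with y hy
    simp [(hasFDerivAt_weightedPow hy).fderiv]
  have hdq := hasFDerivAt_mobiusDenom a x
  have hD := ((((((hasFDerivAt_id x).norm_sq.const_mul B).const_add A).const_mul 2).mul_const γ).mul
      (hdq.rpow_const (p := γ - 1) (Or.inl hx))).mul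
      ((((hasFDerivAt_id x).inner ℝ (hasFDerivAt_const v x)).const_mul (‖a‖ ^ 2)).sub_const ⟪a, v⟫)
    |>.add ((((hdq.rpow_const (p := γ) (Or.inl hx)).const_mul (2 * B))).mul
      ((hasFDerivAt_id x).inner ℝ (hasFDerivAt_const v x)))
  rw [(hD.congr_of_eventuallyEq hev).fderiv]
  simp only [id_eq, Pi.mul_apply, map_sub, map_smul, ContinuousLinearMap.comp_id, smul_add,
    add_apply, smul_apply, ContinuousLinearMap.comp_apply, ContinuousLinearMap.prod_apply,
    ContinuousLinearMap.id_apply, zero_apply, fderivInnerCLM_apply, inner_zero_right,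
    real_inner_self_eq_norm_sq, zero_add, smul_eq_mul, sub_apply, coe_innerSL_apply, nsmul_eq_mul,
    Nat.cast_ofNat, inner_sub_left, real_inner_smul_left, sub_sub, one_add_one_eq_two]
  ring

lemma HasFDerivAt.hasDerivAt_comp_smul_const {F : Type*} [NormedAddCommGroup F]
    [NormedSpace ℝ F] {f : E → F} {f' : E →L[ℝ] F} (hf : HasFDerivAt f f' x) :
    HasDerivAt (fun t : ℝ => f (t • x)) (f' x) 1 := by
  have hsmul : HasDerivAt (fun t : ℝ => t • x) x 1 := by
    simpa using (hasDerivAt_id (1 : ℝ)).smul_const x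
  exact hf.comp_hasDerivAt_of_eq 1 hsmul (one_smul ℝ x).symm

lemma hasDerivAt_mobiusBubble_smul (ha : ‖a‖ < 1) (hx : ‖x‖ = 1) (p : ℝ) :
    HasDerivAt (fun t : ℝ => mobiusBubble a p (t • x)) (-p * mobiusBubble a p x) 1 := by
  have hc : 1 - ‖a‖ ^ 2 ≠ 0 := by nlinarith [norm_nonneg a]
  have hq : mobiusDenom a x ≠ 0 := (mobiusDenom_pos ha hx.le).ne'
  have hcpow : (1 - ‖a‖ ^ 2) ^ (p + 1) = (1 - ‖a‖ ^ 2) ^ p * (1 - ‖a‖ ^ 2) :=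
    Real.rpow_add_one hc p
  have hqpow : mobiusDenom a x ^ (-p) = mobiusDenom a x ^ (-p - 1) * mobiusDenom a x := by
    rw [← Real.rpow_add_one hq, sub_add_cancel]
  have hdef : mobiusDenom a x = ‖a‖ ^ 2 * ‖x‖ ^ 2 - 2 * ⟪a, x⟫ + 1 := rfl
  refine ((hasFDerivAt_weightedPow hq).add
    (hasFDerivAt_weightedPow hq)).hasDerivAt_comp_smul_const.congr_deriv ?_
  simp only [add_apply, smul_apply, coe_innerSL_apply, smul_eq_mul, inner_sub_left,
    real_inner_smul_left, real_inner_self_eq_norm_sq]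
  simp only [mobiusBubble, weightedPow, hx] at hdef ⊢
  linear_combination (p * (1 - ‖a‖ ^ 2) ^ p) * hqpow - (p * mobiusDenom a x ^ (-p - 1)) * hcpow
    + (p * (1 - ‖a‖ ^ 2) ^ p * mobiusDenom a x ^ (-p - 1)) * hdef

end InnerProductSpace

section Euclidean

variable {n : ℕ} {a x : EuclideanSpace ℝ (Fin n)} {p : ℝ}

lemma lapl_weightedPow (hx : mobiusDenom a x ≠ 0) (A B γ : ℝ) :
    lapl (weightedPow a A B γ) x =
      weightedPow a (2 * B * (n + 2 * γ)) 0 γ x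
        + weightedPow a (2 * γ * (‖a‖ ^ 2 * (n + 2 * γ - 2) * A - 2 * B))
            (2 * γ * ‖a‖ ^ 2 * (n + 2 * γ) * B) (γ - 1) x := by
  have hpow : mobiusDenom a x ^ γ = mobiusDenom a x ^ (γ - 1) * mobiusDenom a x := by
    rw [← Real.rpow_add_one hx, sub_add_cancel]
  have hpow_sub_two : mobiusDenom a x ^ (γ - 2) * mobiusDenom a x = mobiusDenom a x ^ (γ - 1) := by
    rw [← Real.rpow_add_one hx]
    ring_nf
  have hdef : mobiusDenom a x = ‖a‖ ^ 2 * ‖x‖ ^ 2 - 2 * ⟪a, x⟫ + 1 := rfl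
  have hsq (w : EuclideanSpace ℝ (Fin n)) : ∑ i, ⟪w, EuclideanSpace.single i 1⟫ ^ 2 = ‖w‖ ^ 2 := by
    simp only [sq, sum_inner_single_mul_inner_single, real_inner_self_eq_norm_mul_norm]
  unfold lapl
  simp only [fderiv_fderiv_weightedPow_apply hx, Finset.sum_add_distrib, ← Finset.mul_sum, hsq,
    sum_inner_single_mul_inner_single, PiLp.norm_single, norm_one, one_pow, Finset.sum_const,
    Finset.card_univ, Fintype.card_fin, nsmul_eq_mul, norm_sq_smul_sub_eq_mobiusDenom,
    inner_sub_right, real_inner_smul_right, real_inner_self_eq_norm_sq, real_inner_comm a x]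
  unfold weightedPow
  linear_combination (-4 * B * γ) * hpow + (4 * γ * (γ - 1) * (A + B * ‖x‖ ^ 2) * ‖a‖ ^ 2) * hpow_sub_two
    - (4 * B * γ * mobiusDenom a x ^ (γ - 1)) * hdef

lemma lapl_weightedPow_const_eq_zero (hx : mobiusDenom a x ≠ 0) {γ : ℝ}
    (hγ : (n : ℝ) = 2 - 2 * γ) (A : ℝ) : lapl (weightedPow a A 0 γ) x = 0 := by
  rw [lapl_weightedPow hx, hγ]
  simp [weightedPow]

lemma lapl_weightedPow_poisson_eq_zero (hx : mobiusDenom a x ≠ 0) {γ : ℝ}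
    (hγ : (n : ℝ) = -2 * γ) (D : ℝ) : lapl (weightedPow a (-D) (D * ‖a‖ ^ 2) γ) x = 0 := by
  rw [lapl_weightedPow hx, hγ]
  simp only [weightedPow]
  ring

lemma lapl_mobiusBubble (hp : (n : ℝ) = 2 * p + 4) (hx : mobiusDenom a x ≠ 0) :
    lapl (mobiusBubble a p) x =
      weightedPow a (-(2 * p * (2 * ‖a‖ ^ 2 * (1 - ‖a‖ ^ 2) ^ p + (1 - ‖a‖ ^ 2) ^ (p + 1)))) 0
          (-p - 1) x
        + weightedPow a (-(2 * p * (p + 1) * (1 - ‖a‖ ^ 2) ^ (p + 1)))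
            (2 * p * (p + 1) * (1 - ‖a‖ ^ 2) ^ (p + 1) * ‖a‖ ^ 2) (-p - 2) x := by
  unfold mobiusBubble
  rw [lapl_add (contDiffAt_weightedPow hx) (contDiffAt_weightedPow hx),
    lapl_weightedPow hx, lapl_weightedPow hx, show -p - 1 - 1 = -p - 2 by ring, hp]
  simp only [weightedPow]
  ring

lemma lapl_lapl_mobiusBubble (hp : (n : ℝ) = 2 * p + 4) (hx : mobiusDenom a x ≠ 0) :
    lapl (lapl (mobiusBubble a p)) x = 0 := by
  have hev : lapl (mobiusBubble a p) =ᶠ[𝓝 x] _ :=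
    ((continuous_mobiusDenom a).continuousAt.eventually_ne hx).mono
      fun y hy => lapl_mobiusBubble hp hy
  rw [hev.lapl.eq_of_nhds, lapl_add (contDiffAt_weightedPow hx) (contDiffAt_weightedPow hx),
    lapl_weightedPow_const_eq_zero hx (by linarith),
    lapl_weightedPow_poisson_eq_zero hx (by linarith), add_zero]

lemma mobiusFactor_bubble_eq (ha : ‖a‖ < 1) (hx : 0 < mobiusDenom a x) :
    mobiusFactor a x ^ (((n : ℝ) - 4) / 2)
        + ((n : ℝ) - 4) / 4 * (1 - ‖x‖ ^ 2) * mobiusFactor a x ^ (((n : ℝ) - 2) / 2)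
      = mobiusBubble a (((n : ℝ) - 4) / 2) x := by
  have hc : 0 ≤ 1 - ‖a‖ ^ 2 := by nlinarith [norm_nonneg a]
  have hsplit (s : ℝ) : mobiusFactor a x ^ s = (1 - ‖a‖ ^ 2) ^ s * mobiusDenom a x ^ (-s) := by
    rw [show mobiusFactor a x = (1 - ‖a‖ ^ 2) / mobiusDenom a x from rfl,
      Real.div_rpow hc hx.le, Real.rpow_neg hx.le, div_eq_mul_inv]
  rw [hsplit, hsplit, show ((n : ℝ) - 2) / 2 = ((n : ℝ) - 4) / 2 + 1 by ring]
  simp only [mobiusBubble, weightedPow, neg_add']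
  ring

end Euclidean

theorem stmt16_general (n : ℕ)
    (a : EuclideanSpace ℝ (Fin n)) (ha : ‖a‖ < 1) :
    let U : EuclideanSpace ℝ (Fin n) → ℝ := fun x =>
      mobiusFactor a x ^ (((n : ℝ) - 4) / 2) +
        ((n : ℝ) - 4) / 4 * (1 - ‖x‖ ^ 2) * mobiusFactor a x ^ (((n : ℝ) - 2) / 2)
    (∀ x : EuclideanSpace ℝ (Fin n), ‖x‖ ≤ 1 → lapl (lapl U) x = 0) ∧
    (∀ x : EuclideanSpace ℝ (Fin n), ‖x‖ = 1 →
      deriv (fun t : ℝ => U (t • x)) 1 = -(((n : ℝ) - 4) / 2) * U x) := by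
  intro U
  have hU {x : EuclideanSpace ℝ (Fin n)} (hx : ‖x‖ ≤ 1) :
      U =ᶠ[𝓝 x] mobiusBubble a (((n : ℝ) - 4) / 2) :=
    (continuousAt_const.eventually_lt (continuous_mobiusDenom a).continuousAt
      (mobiusDenom_pos ha hx)).mono fun y hy => mobiusFactor_bubble_eq ha hy
  refine ⟨fun x hx => ?_, fun x hx => ?_⟩
  · rw [(hU hx).lapl.lapl.eq_of_nhds]
    exact lapl_lapl_mobiusBubble (by ring) (mobiusDenom_pos ha hx).ne'
  · have hline : Filter.Tendsto (fun t : ℝ => t • x) (𝓝 1) (𝓝 x) :=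
      ((continuous_id (X := ℝ)).smul continuous_const).tendsto' 1 x (one_smul ℝ x)
    have hradial : HasDerivAt (fun t : ℝ => U (t • x)) _ 1 :=
      (hasDerivAt_mobiusBubble_smul ha hx _).congr_of_eventuallyEq ((hU hx.le).comp_tendsto hline)
    rw [hradial.deriv, (hU hx.le).eq_of_nhds]

/-- for `n ≥ 3`, `n ≠ 4`, `a ∈ Bⁿ`, the function
`U_a = Û_a + ((n-4)/4)(1-|x|²) Û_a^{(n-2)/(n-4)}`, where
`Û_a = ((1-|a|²)/(|a|²|x|²-2a·x+1))^{(n-4)/2}`, is biharmonic on the closed unit ball and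
satisfies `∂U_a/∂r = -((n-4)/2) U_a` on the unit sphere. -/
theorem stmt16 (n : ℕ) (hn : 3 ≤ n) (hn4 : n ≠ 4)
    (a : EuclideanSpace ℝ (Fin n)) (ha : ‖a‖ < 1) :
    let U : EuclideanSpace ℝ (Fin n) → ℝ := fun x =>
      mobiusFactor a x ^ (((n : ℝ) - 4) / 2) +
        ((n : ℝ) - 4) / 4 * (1 - ‖x‖ ^ 2) * mobiusFactor a x ^ (((n : ℝ) - 2) / 2)
    (∀ x : EuclideanSpace ℝ (Fin n), ‖x‖ ≤ 1 → lapl (lapl U) x = 0) ∧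
    (∀ x : EuclideanSpace ℝ (Fin n), ‖x‖ = 1 →
      deriv (fun t : ℝ => U (t • x)) 1 = -(((n : ℝ) - 4) / 2) * U x) :=
  stmt16_general n a ha
end
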